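/- Let n ≥ 1 be an integer and for an integer m ≥ 0 define D_m(x) := (1/4) · Σ_{ν ∈ Λ_m^*} e_ν(x) for x ∈ ℝ². Then: (i) for all x ∈ ℝ², Σ_{ν ∈ Λ_n^*} c̃_ν e_ν(x) = 2·[D_n(x) + D_{n−1}(x)] − (1/2)·(cos(2πn x₁) + cos(2πn x₂)); and (ii) for every x ∈ ℝ² with cos(2πx₁) ≠ cos(2πx₂), D_n(x) = (1/2) · [cos(π(2n+1)x₁)·cos(πx₁) − cos(π(2n+1)x₂)·cos(πx₂)] / [cos(2πx₁) − cos(2πx₂)]. -/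
import Mathlib


open MeasureTheory Complex

attribute [local instance] Classical.propDecidable

/-- The exponential e_k(x) = exp(2 pi i (k1 x1 + k2 x2)). -/
noncomputable def e2 (k : ℤ × ℤ) (x : ℝ × ℝ) : ℂ :=
  Complex.exp (2 * Real.pi * Complex.I * ((k.1 : ℂ) * x.1 + (k.2 : ℂ) * x.2))

/-- The point k/(2n) in the plane. -/
noncomputable def pt2 (n : ℕ) (k : ℤ × ℤ) : ℝ × ℝ :=
  ((k.1 : ℝ) / (2 * n), (k.2 : ℝ) / (2 * n))

/-- Λ_m^* = {j : |j1+j2| ≤ m and |j1-j2| ≤ m}. -/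
noncomputable def LamStar (m : ℕ) : Finset (ℤ × ℤ) :=
  (Finset.Icc (-(m : ℤ), -(m : ℤ)) ((m : ℤ), (m : ℤ))).filter
    fun j => |j.1 + j.2| ≤ (m : ℤ) ∧ |j.1 - j.2| ≤ (m : ℤ)

/-- The weight c̃_ν on Λ_n^*. -/
noncomputable def ctilde (n : ℕ) (ν : ℤ × ℤ) : ℝ :=
  if |ν.1 + ν.2| < (n : ℤ) ∧ |ν.1 - ν.2| < (n : ℤ) then 1
  else if |ν.1 + ν.2| = (n : ℤ) ∧ |ν.1 - ν.2| = (n : ℤ) then 1/4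
  else 1/2

/-- D_m(x) = (1/4) Σ_{ν ∈ Λ_m^*} e_ν(x). -/
noncomputable def D2 (m : ℕ) (x : ℝ × ℝ) : ℂ :=
  (1 / 4 : ℂ) * ∑ ν ∈ LamStar m, e2 ν x

/- ### Auxiliary lemmas -/

lemma icc_succ' (k : ℕ) : Finset.Icc (-(k+1:ℤ)) (k+1) =
    insert (-(k+1:ℤ)) (insert ((k+1:ℤ)) (Finset.Icc (-(k:ℤ)) k)) := by
  ext x; simp [Finset.mem_Icc]; omega

lemma exp_pair' (y : ℝ) :
    Complex.exp ((y:ℂ)*Complex.I) + Complex.exp (-(y:ℂ)*Complex.I) = 2 * (Real.cos y : ℂ) := by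
  rw [Complex.ofReal_cos, Complex.cos]
  ring_nf

lemma dir1' (m : ℕ) (θ : ℝ) :
    (∑ u ∈ Finset.Icc (-(m:ℤ)) m, Complex.exp (2*Real.pi*Complex.I*(u:ℂ)*θ)) * (Real.sin (Real.pi*θ) : ℂ)
      = (Real.sin ((2*m+1)*(Real.pi*θ)) : ℂ) := by
  induction m with
  | zero => simp
  | succ k ih =>
    rw [show ((k+1:ℕ):ℤ) = (k:ℤ)+1 from by push_cast; ring, icc_succ',
      Finset.sum_insert (by simp [Finset.mem_Icc]; omega),
      Finset.sum_insert (by simp [Finset.mem_Icc])]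
    have hpair : Complex.exp (2*Real.pi*Complex.I*((-(k+1:ℤ)):ℂ)*θ) + Complex.exp (2*Real.pi*Complex.I*(((k+1:ℤ)):ℂ)*θ)
        = 2 * (Real.cos ((2*(k+1))*(Real.pi*θ)) : ℂ) := by
      have h := exp_pair' ((2*(k+1))*(Real.pi*θ))
      rw [← h]
      rw [show (2*Real.pi*Complex.I*((-(k+1:ℤ)):ℂ)*θ) = -(((2*(k+1))*(Real.pi*θ):ℝ):ℂ)*Complex.I by push_cast; ring,
        show (2*Real.pi*Complex.I*(((k+1:ℤ)):ℂ)*θ) = (((2*(k+1))*(Real.pi*θ):ℝ):ℂ)*Complex.I by push_cast; ring]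
      ring
    have htrig : Real.sin ((2*(k+1)+1)*(Real.pi*θ))
        = Real.sin ((2*k+1)*(Real.pi*θ)) + 2 * Real.cos ((2*(k+1))*(Real.pi*θ)) * Real.sin (Real.pi*θ) := by
      have e1 : ((2:ℝ)*(k+1)+1)*(Real.pi*θ) = (2*(k+1))*(Real.pi*θ) + Real.pi*θ := by ring
      have e2 : ((2:ℝ)*k+1)*(Real.pi*θ) = (2*(k+1))*(Real.pi*θ) - Real.pi*θ := by ring
      rw [e1, e2, Real.sin_add, Real.sin_sub]
      ring
    have htrigC := congrArg (fun r : ℝ => (r:ℂ)) htrig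
    push_cast at ih hpair htrigC ⊢
    set S := ∑ u ∈ Finset.Icc (-(k:ℤ)) k, Complex.exp (2*(Real.pi:ℂ)*Complex.I*(u:ℂ)*(θ:ℂ)) with hS
    linear_combination (norm := ring_nf) ih + Complex.sin ((Real.pi:ℂ)*θ) * hpair - htrigC

lemma dir2' (m : ℕ) (θ : ℝ) :
    (∑ u ∈ Finset.Icc (-(m:ℤ)) m, (-1:ℂ)^u * Complex.exp (2*Real.pi*Complex.I*(u:ℂ)*θ)) * (Real.cos (Real.pi*θ) : ℂ)
      = (-1)^m * (Real.cos ((2*m+1)*(Real.pi*θ)) : ℂ) := by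
  induction m with
  | zero => simp
  | succ k ih =>
    rw [show ((k+1:ℕ):ℤ) = (k:ℤ)+1 from by push_cast; ring, icc_succ',
      Finset.sum_insert (by simp [Finset.mem_Icc]; omega),
      Finset.sum_insert (by simp [Finset.mem_Icc])]
    have hsgn1 : ((-1:ℂ))^(-((k:ℤ)+1)) = (-1:ℂ)^(k+1) := by
      rw [zpow_neg]
      rw [show ((k:ℤ)+1) = ((k+1:ℕ):ℤ) from by push_cast; ring, zpow_natCast]
      rw [inv_eq_iff_eq_inv, ← inv_pow]
      norm_num
    have hsgn2 : ((-1:ℂ))^(((k:ℤ)+1)) = (-1:ℂ)^(k+1) := by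
      rw [show ((k:ℤ)+1) = ((k+1:ℕ):ℤ) from by push_cast; ring, zpow_natCast]
    rw [hsgn1, hsgn2]
    have hpair : Complex.exp (2*Real.pi*Complex.I*((-((k:ℤ)+1)):ℂ)*θ) + Complex.exp (2*Real.pi*Complex.I*((((k:ℤ)+1)):ℂ)*θ)
        = 2 * (Real.cos ((2*(k+1))*(Real.pi*θ)) : ℂ) := by
      have h := exp_pair' ((2*(k+1))*(Real.pi*θ))
      rw [← h]
      rw [show (2*Real.pi*Complex.I*((-((k:ℤ)+1)):ℂ)*θ) = -(((2*(k+1))*(Real.pi*θ):ℝ):ℂ)*Complex.I by push_cast; ring,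
        show (2*Real.pi*Complex.I*((((k:ℤ)+1)):ℂ)*θ) = (((2*(k+1))*(Real.pi*θ):ℝ):ℂ)*Complex.I by push_cast; ring]
      ring
    have htrig : Real.cos ((2*(k+1)+1)*(Real.pi*θ))
        = 2 * Real.cos ((2*(k+1))*(Real.pi*θ)) * Real.cos (Real.pi*θ) - Real.cos ((2*k+1)*(Real.pi*θ)) := by
      have e1 : ((2:ℝ)*(k+1)+1)*(Real.pi*θ) = (2*(k+1))*(Real.pi*θ) + Real.pi*θ := by ring
      have e2 : ((2:ℝ)*k+1)*(Real.pi*θ) = (2*(k+1))*(Real.pi*θ) - Real.pi*θ := by ring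
      rw [e1, e2, Real.cos_add, Real.cos_sub]
      ring
    have htrigC := congrArg (fun r : ℝ => (r:ℂ)) htrig
    push_cast at ih hpair htrigC ⊢
    set S := ∑ u ∈ Finset.Icc (-(k:ℤ)) k, (-1:ℂ)^u * Complex.exp (2*(Real.pi:ℂ)*Complex.I*(u:ℂ)*(θ:ℂ)) with hS
    linear_combination ih + ((-1:ℂ))^(k+1) * Complex.cos ((Real.pi:ℂ)*θ) * hpair - ((-1:ℂ))^(k+1) * htrigC

lemma mem_lam (m : ℕ) (ν : ℤ × ℤ) :
    ν ∈ LamStar m ↔ |ν.1 + ν.2| ≤ (m : ℤ) ∧ |ν.1 - ν.2| ≤ (m : ℤ) := by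
  simp only [LamStar, Finset.mem_filter, Finset.mem_Icc, Prod.mk_le_mk, Prod.le_def, abs_le]
  omega

lemma lam_sum (m : ℕ) (s t : ℝ) :
    ∑ ν ∈ LamStar m, e2 ν (s+t, s-t)
      = ∑ p ∈ ((Finset.Icc (-(m:ℤ)) m) ×ˢ (Finset.Icc (-(m:ℤ)) m)).filter (fun p => Even (p.1 + p.2)),
          Complex.exp (2*Real.pi*Complex.I*((p.1:ℂ)*s + (p.2:ℂ)*t)) := by
  apply Finset.sum_nbij' (i := fun ν => (ν.1+ν.2, ν.1-ν.2)) (j := fun p => ((p.1+p.2)/2, (p.1-p.2)/2))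
  · intro ν hν
    rw [mem_lam] at hν
    simp only [abs_le] at hν
    simp [Finset.mem_filter, Finset.mem_product, Finset.mem_Icc, Int.even_iff, abs_le]
    omega
  · intro p hp
    simp only [Finset.mem_filter, Finset.mem_product, Finset.mem_Icc, Int.even_iff] at hp
    rw [mem_lam]
    simp [abs_le]
    omega
  · intro ν hν
    rw [mem_lam] at hν
    simp only [Prod.ext_iff]
    omega
  · intro p hp
    simp only [Finset.mem_filter, Finset.mem_product, Finset.mem_Icc, Int.even_iff] at hp
    simp only [Prod.ext_iff]
    omega
  · intro ν hν
    simp only [e2]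
    congr 1
    push_cast
    ring

lemma even_filter_sum (m : ℕ) (f : ℤ × ℤ → ℂ) :
    2 * ∑ p ∈ ((Finset.Icc (-(m:ℤ)) m) ×ˢ (Finset.Icc (-(m:ℤ)) m)).filter (fun p => Even (p.1 + p.2)), f p
      = (∑ p ∈ (Finset.Icc (-(m:ℤ)) m) ×ˢ (Finset.Icc (-(m:ℤ)) m), f p)
        + ∑ p ∈ (Finset.Icc (-(m:ℤ)) m) ×ˢ (Finset.Icc (-(m:ℤ)) m), (-1:ℂ)^(p.1+p.2) * f p := by
  set B := (Finset.Icc (-(m:ℤ)) m) ×ˢ (Finset.Icc (-(m:ℤ)) m)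
  rw [← Finset.sum_filter_add_sum_filter_not B (fun p => Even (p.1+p.2)) f,
      ← Finset.sum_filter_add_sum_filter_not B (fun p => Even (p.1+p.2)) (fun p => (-1:ℂ)^(p.1+p.2) * f p)]
  have h1 : ∑ p ∈ B.filter (fun p => Even (p.1+p.2)), (-1:ℂ)^(p.1+p.2) * f p
      = ∑ p ∈ B.filter (fun p => Even (p.1+p.2)), f p := by
    apply Finset.sum_congr rfl
    intro p hp
    simp only [Finset.mem_filter] at hp
    rw [Even.neg_one_zpow hp.2, one_mul]
  have h2 : ∑ p ∈ B.filter (fun p => ¬ Even (p.1+p.2)), (-1:ℂ)^(p.1+p.2) * f p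
      = -∑ p ∈ B.filter (fun p => ¬ Even (p.1+p.2)), f p := by
    rw [← Finset.sum_neg_distrib]
    apply Finset.sum_congr rfl
    intro p hp
    simp only [Finset.mem_filter] at hp
    rw [Odd.neg_one_zpow (Int.not_even_iff_odd.mp hp.2)]
    ring
  rw [h1, h2]
  ring

lemma prodSum2 (m : ℕ) (f g : ℤ → ℂ) :
    ∑ p ∈ (Finset.Icc (-(m:ℤ)) m) ×ˢ (Finset.Icc (-(m:ℤ)) m), f p.1 * g p.2
      = (∑ u ∈ Finset.Icc (-(m:ℤ)) m, f u) * (∑ v ∈ Finset.Icc (-(m:ℤ)) m, g v) := by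
  rw [Finset.sum_product, Finset.sum_mul]
  apply Finset.sum_congr rfl
  intro u _
  rw [Finset.mul_sum]

lemma partii_core (n : ℕ) (s t : ℝ) (ha : Real.sin (Real.pi*s) ≠ 0) (hb : Real.cos (Real.pi*s) ≠ 0)
    (hc : Real.sin (Real.pi*t) ≠ 0) (hd : Real.cos (Real.pi*t) ≠ 0) :
    ∑ ν ∈ LamStar n, e2 ν (s+t, s-t)
      = (1/2 : ℂ) * ( ((Real.sin ((2*n+1)*(Real.pi*s)) * Real.sin ((2*n+1)*(Real.pi*t)) / (Real.sin (Real.pi*s) * Real.sin (Real.pi*t)) : ℝ) : ℂ)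
          + ((Real.cos ((2*n+1)*(Real.pi*s)) * Real.cos ((2*n+1)*(Real.pi*t)) / (Real.cos (Real.pi*s) * Real.cos (Real.pi*t)) : ℝ) : ℂ) ) := by
  have ha' : ((Real.sin (Real.pi*s) : ℝ) : ℂ) ≠ 0 := Complex.ofReal_ne_zero.mpr ha
  have hb' : ((Real.cos (Real.pi*s) : ℝ) : ℂ) ≠ 0 := Complex.ofReal_ne_zero.mpr hb
  have hc' : ((Real.sin (Real.pi*t) : ℝ) : ℂ) ≠ 0 := Complex.ofReal_ne_zero.mpr hc
  have hd' : ((Real.cos (Real.pi*t) : ℝ) : ℂ) ≠ 0 := Complex.ofReal_ne_zero.mpr hd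
  rw [lam_sum]
  have key := even_filter_sum n (fun p => Complex.exp (2*Real.pi*Complex.I*((p.1:ℂ)*s + (p.2:ℂ)*t)))
  have e1 : ∀ p : ℤ × ℤ, Complex.exp (2*Real.pi*Complex.I*((p.1:ℂ)*s + (p.2:ℂ)*t))
      = Complex.exp (2*Real.pi*Complex.I*(p.1:ℂ)*s) * Complex.exp (2*Real.pi*Complex.I*(p.2:ℂ)*t) := by
    intro p
    rw [← Complex.exp_add]
    congr 1
    ring
  have hP : (∑ p ∈ (Finset.Icc (-(n:ℤ)) n) ×ˢ (Finset.Icc (-(n:ℤ)) n),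
        Complex.exp (2*Real.pi*Complex.I*((p.1:ℂ)*s + (p.2:ℂ)*t)))
      = ((Real.sin ((2*n+1)*(Real.pi*s)) : ℂ) / (Real.sin (Real.pi*s) : ℂ))
        * ((Real.sin ((2*n+1)*(Real.pi*t)) : ℂ) / (Real.sin (Real.pi*t) : ℂ)) := by
    rw [Finset.sum_congr rfl (fun p _ => e1 p),
      prodSum2 n (fun u => Complex.exp (2*Real.pi*Complex.I*(u:ℂ)*s)) (fun v => Complex.exp (2*Real.pi*Complex.I*(v:ℂ)*t)),
      show (∑ u ∈ Finset.Icc (-(n:ℤ)) n, Complex.exp (2*Real.pi*Complex.I*(u:ℂ)*s)) = ((Real.sin ((2*n+1)*(Real.pi*s)):ℝ):ℂ) / ((Real.sin (Real.pi*s):ℝ):ℂ) from by rw [eq_div_iff ha']; exact dir1' n s,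
      show (∑ v ∈ Finset.Icc (-(n:ℤ)) n, Complex.exp (2*Real.pi*Complex.I*(v:ℂ)*t)) = ((Real.sin ((2*n+1)*(Real.pi*t)):ℝ):ℂ) / ((Real.sin (Real.pi*t):ℝ):ℂ) from by rw [eq_div_iff hc']; exact dir1' n t]
  have hQ : (∑ p ∈ (Finset.Icc (-(n:ℤ)) n) ×ˢ (Finset.Icc (-(n:ℤ)) n),
        (-1:ℂ)^(p.1+p.2) * Complex.exp (2*Real.pi*Complex.I*((p.1:ℂ)*s + (p.2:ℂ)*t)))
      = (((-1:ℂ)^n * (Real.cos ((2*n+1)*(Real.pi*s)) : ℂ)) / (Real.cos (Real.pi*s) : ℂ))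
        * (((-1:ℂ)^n * (Real.cos ((2*n+1)*(Real.pi*t)) : ℂ)) / (Real.cos (Real.pi*t) : ℂ)) := by
    have e2' : ∀ p : ℤ × ℤ, (-1:ℂ)^(p.1+p.2) * Complex.exp (2*Real.pi*Complex.I*((p.1:ℂ)*s + (p.2:ℂ)*t))
        = ((-1:ℂ)^p.1 * Complex.exp (2*Real.pi*Complex.I*(p.1:ℂ)*s))
          * ((-1:ℂ)^p.2 * Complex.exp (2*Real.pi*Complex.I*(p.2:ℂ)*t)) := by
      intro p
      rw [zpow_add₀ (by norm_num : (-1:ℂ) ≠ 0), e1 p]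
      ring
    rw [Finset.sum_congr rfl (fun p _ => e2' p),
      prodSum2 n (fun u => (-1:ℂ)^u * Complex.exp (2*Real.pi*Complex.I*(u:ℂ)*s)) (fun v => (-1:ℂ)^v * Complex.exp (2*Real.pi*Complex.I*(v:ℂ)*t)),
      show (∑ u ∈ Finset.Icc (-(n:ℤ)) n, (-1:ℂ)^u * Complex.exp (2*Real.pi*Complex.I*(u:ℂ)*s)) = ((-1:ℂ)^n * ((Real.cos ((2*n+1)*(Real.pi*s)):ℝ):ℂ)) / ((Real.cos (Real.pi*s):ℝ):ℂ) from by rw [eq_div_iff hb']; exact dir2' n s,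
      show (∑ v ∈ Finset.Icc (-(n:ℤ)) n, (-1:ℂ)^v * Complex.exp (2*Real.pi*Complex.I*(v:ℂ)*t)) = ((-1:ℂ)^n * ((Real.cos ((2*n+1)*(Real.pi*t)):ℝ):ℂ)) / ((Real.cos (Real.pi*t):ℝ):ℂ) from by rw [eq_div_iff hd']; exact dir2' n t]
  rw [hP, hQ] at key
  have hsq : ((-1:ℂ)^n) * ((-1:ℂ)^n) = 1 := by
    rw [← pow_add, show n + n = 2*n from by ring, pow_mul]
    norm_num
  rw [Complex.ofReal_div, Complex.ofReal_div, Complex.ofReal_mul, Complex.ofReal_mul, Complex.ofReal_mul, Complex.ofReal_mul]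
  linear_combination (1/2 : ℂ) * key + (1/2 : ℂ) * (((Real.cos ((2*n+1)*(Real.pi*s)):ℂ) * (Real.cos ((2*n+1)*(Real.pi*t)):ℂ)) / ((Real.cos (Real.pi*s):ℂ) * (Real.cos (Real.pi*t):ℂ))) * hsq

lemma parti (n : ℕ) (hn : 1 ≤ n) (x : ℝ × ℝ) :
    ∑ ν ∈ LamStar n, (ctilde n ν : ℂ) * e2 ν x
      = 2 * (D2 n x + D2 (n - 1) x)
        - (1 / 2) * ((Real.cos (2 * Real.pi * n * x.1) : ℂ)
            + (Real.cos (2 * Real.pi * n * x.2) : ℂ)) := by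
  have hsplit : ∑ ν ∈ LamStar n, (ctilde n ν : ℂ) * e2 ν x
      = (1/2) * (∑ ν ∈ LamStar n, e2 ν x)
        + ∑ ν ∈ LamStar n, (((ctilde n ν : ℂ) - 1/2) * e2 ν x) := by
    rw [Finset.mul_sum, ← Finset.sum_add_distrib]
    apply Finset.sum_congr rfl
    intro ν _
    ring
  set P : ℤ × ℤ → Prop := fun ν => |ν.1 + ν.2| < (n:ℤ) ∧ |ν.1 - ν.2| < (n:ℤ) with hP
  set Q : ℤ × ℤ → Prop := fun ν => |ν.1 + ν.2| = (n:ℤ) ∧ |ν.1 - ν.2| = (n:ℤ) with hQ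
  set g : ℤ × ℤ → ℂ := fun ν => ((ctilde n ν : ℂ) - 1/2) * e2 ν x with hg
  have h1 : ∑ ν ∈ LamStar n, g ν
      = ∑ ν ∈ (LamStar n).filter P, g ν + ∑ ν ∈ (LamStar n).filter (fun ν => ¬ P ν), g ν :=
    (Finset.sum_filter_add_sum_filter_not _ _ _).symm
  have hint : (LamStar n).filter P = LamStar (n-1) := by
    ext ν
    simp only [Finset.mem_filter, mem_lam, hP]
    omega
  have h2 : ∑ ν ∈ (LamStar n).filter P, g ν = (1/2) * ∑ ν ∈ LamStar (n-1), e2 ν x := by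
    rw [hint, Finset.mul_sum]
    apply Finset.sum_congr rfl
    intro ν hν
    rw [mem_lam] at hν
    have : ctilde n ν = 1 := by
      rw [ctilde, if_pos]
      constructor <;> omega
    rw [hg]
    simp only [this]
    push_cast
    ring
  have h3 : ∑ ν ∈ (LamStar n).filter (fun ν => ¬ P ν), g ν
      = ∑ ν ∈ ((LamStar n).filter (fun ν => ¬ P ν)).filter Q, g ν
        + ∑ ν ∈ ((LamStar n).filter (fun ν => ¬ P ν)).filter (fun ν => ¬ Q ν), g ν :=
    (Finset.sum_filter_add_sum_filter_not _ _ _).symm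
  have h4 : ∑ ν ∈ ((LamStar n).filter (fun ν => ¬ P ν)).filter (fun ν => ¬ Q ν), g ν = 0 := by
    apply Finset.sum_eq_zero
    intro ν hν
    simp only [Finset.mem_filter, hP, hQ] at hν
    have : ctilde n ν = 1/2 := by
      rw [ctilde, if_neg hν.1.2, if_neg hν.2]
    rw [hg]
    simp only [this]
    push_cast
    ring
  have hC : ((LamStar n).filter (fun ν => ¬ P ν)).filter Q
      = {((n:ℤ), 0), (0, (n:ℤ)), (-(n:ℤ), 0), (0, -(n:ℤ))} := by
    ext ν
    simp only [Finset.mem_filter, mem_lam, hP, hQ, Finset.mem_insert, Finset.mem_singleton,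
      Prod.ext_iff, abs_le, abs_lt, abs_eq (Int.natCast_nonneg n)]
    omega
  have h5 : ∑ ν ∈ ((LamStar n).filter (fun ν => ¬ P ν)).filter Q, g ν
      = -(1/4) * (e2 ((n:ℤ), 0) x + e2 (0, (n:ℤ)) x + e2 (-(n:ℤ), 0) x + e2 (0, -(n:ℤ)) x) := by
    have hgval : ∀ ν ∈ ((LamStar n).filter (fun ν => ¬ P ν)).filter Q, g ν = -(1/4) * e2 ν x := by
      intro ν hν
      simp only [Finset.mem_filter, hP, hQ] at hν
      have : ctilde n ν = 1/4 := by
        rw [ctilde, if_neg hν.1.2, if_pos hν.2]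
      rw [hg]
      simp only [this]
      push_cast
      ring
    rw [Finset.sum_congr rfl hgval, hC]
    rw [Finset.sum_insert (by simp [Prod.ext_iff]; omega),
      Finset.sum_insert (by simp [Prod.ext_iff]; omega),
      Finset.sum_insert (by simp [Prod.ext_iff]; omega),
      Finset.sum_singleton]
    ring
  have hc1 : e2 ((n:ℤ), 0) x + e2 (-(n:ℤ), 0) x = 2 * (Real.cos (2*Real.pi*n*x.1) : ℂ) := by
    have := exp_pair' (2*Real.pi*n*x.1)
    rw [← this]
    simp only [e2]
    congr 2 <;> · push_cast; ring
  have hc2 : e2 (0, (n:ℤ)) x + e2 (0, -(n:ℤ)) x = 2 * (Real.cos (2*Real.pi*n*x.2) : ℂ) := by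
    have := exp_pair' (2*Real.pi*n*x.2)
    rw [← this]
    simp only [e2]
    congr 2 <;> · push_cast; ring
  rw [hsplit, h1, h2, h3, h4, h5, D2, D2]
  linear_combination (-(1/4) : ℂ) * hc1 + (-(1/4) : ℂ) * hc2

theorem compact_formula_2d (n : ℕ) (hn : 1 ≤ n) :
    (∀ x : ℝ × ℝ,
      ∑ ν ∈ LamStar n, (ctilde n ν : ℂ) * e2 ν x
        = 2 * (D2 n x + D2 (n - 1) x)
          - (1 / 2) * ((Real.cos (2 * Real.pi * n * x.1) : ℂ)
              + (Real.cos (2 * Real.pi * n * x.2) : ℂ))) ∧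
    (∀ x : ℝ × ℝ, Real.cos (2 * Real.pi * x.1) ≠ Real.cos (2 * Real.pi * x.2) →
      D2 n x = (((1 / 2) *
          (Real.cos (Real.pi * (2 * n + 1) * x.1) * Real.cos (Real.pi * x.1)
            - Real.cos (Real.pi * (2 * n + 1) * x.2) * Real.cos (Real.pi * x.2))
          / (Real.cos (2 * Real.pi * x.1) - Real.cos (2 * Real.pi * x.2)) : ℝ) : ℂ)) := by
  constructor
  · exact parti n hn
  · rintro ⟨x1, x2⟩ hne
    simp only at hne ⊢
    set s : ℝ := (x1 + x2)/2 with hs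
    set t : ℝ := (x1 - x2)/2 with ht
    have hx1 : x1 = s + t := by rw [hs, ht]; ring
    have hx2 : x2 = s - t := by rw [hs, ht]; ring
    rw [hx1, hx2] at hne ⊢
    have hprod : Real.cos (2*Real.pi*(s+t)) - Real.cos (2*Real.pi*(s-t))
        = -8 * (Real.sin (Real.pi*s) * Real.cos (Real.pi*s) * Real.sin (Real.pi*t) * Real.cos (Real.pi*t)) := by
      rw [Real.cos_sub_cos]
      rw [show (2*Real.pi*(s+t) + 2*Real.pi*(s-t))/2 = Real.pi*s + Real.pi*s by ring,
        show (2*Real.pi*(s+t) - 2*Real.pi*(s-t))/2 = Real.pi*t + Real.pi*t by ring,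
        Real.sin_add, Real.sin_add]
      ring
    have habcd : Real.sin (Real.pi*s) * Real.cos (Real.pi*s) * Real.sin (Real.pi*t) * Real.cos (Real.pi*t) ≠ 0 := by
      intro h
      apply hne
      have := hprod
      rw [h] at this
      linarith
    have ha : Real.sin (Real.pi*s) ≠ 0 := fun h => habcd (by rw [h]; ring)
    have hb : Real.cos (Real.pi*s) ≠ 0 := fun h => habcd (by rw [h]; ring)
    have hc : Real.sin (Real.pi*t) ≠ 0 := fun h => habcd (by rw [h]; ring)
    have hd : Real.cos (Real.pi*t) ≠ 0 := fun h => habcd (by rw [h]; ring)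
    have hkey := partii_core n s t ha hb hc hd
    rw [D2, hkey]
    have hreal : (1/4 : ℝ) * ((1/2) *
          ((Real.sin ((2*n+1)*(Real.pi*s)) * Real.sin ((2*n+1)*(Real.pi*t)) / (Real.sin (Real.pi*s) * Real.sin (Real.pi*t)))
            + (Real.cos ((2*n+1)*(Real.pi*s)) * Real.cos ((2*n+1)*(Real.pi*t)) / (Real.cos (Real.pi*s) * Real.cos (Real.pi*t)))))
        = (1/2) * (Real.cos (Real.pi*(2*n+1)*(s+t)) * Real.cos (Real.pi*(s+t))
            - Real.cos (Real.pi*(2*n+1)*(s-t)) * Real.cos (Real.pi*(s-t)))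
          / (Real.cos (2*Real.pi*(s+t)) - Real.cos (2*Real.pi*(s-t))) := by
      rw [hprod,
        show Real.pi*(2*n+1)*(s+t) = (2*n+1)*(Real.pi*s) + (2*n+1)*(Real.pi*t) by ring,
        show Real.pi*(2*n+1)*(s-t) = (2*n+1)*(Real.pi*s) - (2*n+1)*(Real.pi*t) by ring,
        show Real.pi*(s+t) = Real.pi*s + Real.pi*t by ring,
        show Real.pi*(s-t) = Real.pi*s - Real.pi*t by ring,
        Real.cos_add, Real.cos_sub, Real.cos_add, Real.cos_sub]
      field_simp
      ring
    rw [← hreal]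
    push_cast
    ring
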